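/- Fix a ∈ [1,3] and r ∈ (0,1/16], and coefficient functions a_k : {−1,1}^k → [1,a] (with a_0 ≡ 1) for 0 ≤ k ≤ n−1, where n ≥ 1. Let ε ∈ 𝓔_n, let x = f_n(ε) ∈ K_n, and let x̂ = f_{n−1}(ε̂) where ε̂ = (ε_1,…,ε_{n−1}). Define Δ₂ = 2 Σ_{ε′ ∈ 𝓔_{n−1}, ε′ ≠ ε̂} ( ln|f_{n−1}(ε′) − x| − ln|f_{n−1}(ε′) − x̂| ). Then |Δ₂| ≤ 2 Σ_{ℓ=1}^{n−1} 2^{ℓ−1} a r^{ℓ} / ( 2(1 − ar/(1−r)) − a r^{ℓ} ). -/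

import Mathlib

noncomputable section

/-- The sign `±1 : ℝ` associated to a boolean letter. -/
def sgn (b : Bool) : ℝ := if b then 1 else -1

/-- `f_n(ε) = Σ_{k=1}^{n} (a_{k−1}(ε)/2) r^{k−1} ε_k` (0-based: sum over `k < n`). -/
def fN (r : ℝ) (A : ℕ → (ℕ → Bool) → ℝ) (n : ℕ) (ε : ℕ → Bool) : ℝ :=
  ∑ k ∈ Finset.range n, A k ε / 2 * r ^ k * sgn (ε k)

/-- A word of length `n` (element of `𝓔_n`), extended to an infinite word by `false`. -/
def extWord (n : ℕ) (σ : Fin n → Bool) : ℕ → Bool :=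
  fun k => if h : k < n then σ ⟨k, h⟩ else false

/-- The word `ε̂ = (ε_1, …, ε_{n−1})` obtained by deleting the last letter of `ε ∈ 𝓔_n`. -/
def parentWord (n : ℕ) (σ : Fin n → Bool) : Fin (n - 1) → Bool :=
  fun i => σ (Fin.castLE (Nat.sub_le n 1) i)

/-!
Write `x' = f_{n-1}(ε̂)` and `D = 1 - ar/(1-r)`. The point `x = f_n(ε)` is within `a r^{n-1}/2`
of `x'`, while a point `f_{n-1}(ε')` whose word first leaves `ε̂` at index `k` stays at distance
`≥ r^k D` from `x'`: the leading differing term has size `≥ r^k` and the geometric tail after it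
at most `a r^{k+1}/(1-r)`. Since `log` is `1/c`-Lipschitz on `[c, ∞)`, such an `ε'` changes the
logarithm by at most `a r^ℓ / (2D - a r^ℓ)` with `ℓ = n - 1 - k`, and at most `2^{ℓ-1}` words
`ε'` first leave `ε̂` at that index.
-/

open Finset PiNat

lemma abs_sgn (b : Bool) : |sgn b| = 1 := by
  cases b <;> simp [sgn]

lemma abs_sgn_sub_sgn {b b' : Bool} (h : b ≠ b') : |sgn b - sgn b'| = 2 := by
  cases b <;> cases b' <;> simp [sgn] at h ⊢ <;> norm_num

lemma abs_log_sub_log_le_div {u v c : ℝ} (hc : 0 < c) (hu : c ≤ u) (hv : c ≤ v) :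
    |Real.log u - Real.log v| ≤ |u - v| / c := by
  have key : ∀ p q, c ≤ p → c ≤ q → Real.log q - Real.log p ≤ |q - p| / c := by
    intro p q hp hq
    have hp0 : 0 < p := hc.trans_le hp
    calc Real.log q - Real.log p = Real.log (q / p) :=
          (Real.log_div (hc.trans_le hq).ne' hp0.ne').symm
      _ ≤ q / p - 1 := Real.log_le_sub_one_of_pos (div_pos (hc.trans_le hq) hp0)
      _ = (q - p) / p := by field_simp
      _ ≤ |q - p| / c := div_le_div₀ (abs_nonneg _) (le_abs_self _) hc hp
  rw [abs_sub_le_iff]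
  exact ⟨key v u hv hu, abs_sub_comm v u ▸ key u v hu hv⟩

lemma abs_log_abs_sub_sub_log_abs_sub_le {y x x' s δ : ℝ} (hs : s ≤ |y - x'|)
    (hδ : |x - x'| ≤ δ) (hδs : δ < s) :
    |(Real.log |y - x| - Real.log |y - x'|)| ≤ δ / (s - δ) := by
  have hδ0 : 0 ≤ δ := (abs_nonneg _).trans hδ
  have hdist : |(|y - x| - |y - x'|)| ≤ δ := by
    refine (abs_abs_sub_abs_le_abs_sub _ _).trans ?_
    rwa [show y - x - (y - x') = -(x - x') by ring, abs_neg]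
  have hyx : s - δ ≤ |y - x| := by
    have := abs_sub_abs_le_abs_sub (y - x') (y - x)
    rw [show y - x' - (y - x) = x - x' by ring] at this
    linarith
  calc _ ≤ |(|y - x| - |y - x'|)| / (s - δ) :=
        abs_log_sub_log_le_div (by linarith) hyx (by linarith)
    _ ≤ δ / (s - δ) := div_le_div_of_nonneg_right hdist (by linarith)

lemma sum_comp_le_sum_mul_of_card_fiber_le {ι κ : Type*} [DecidableEq κ] {s : Finset ι}
    {t : Finset κ} {φ : ι → κ} {B : κ → ℝ} {c : κ → ℕ} (hφ : ∀ i ∈ s, φ i ∈ t)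
    (hB : ∀ j ∈ t, 0 ≤ B j) (hc : ∀ j ∈ t, #{i ∈ s | φ i = j} ≤ c j) :
    ∑ i ∈ s, B (φ i) ≤ ∑ j ∈ t, (c j : ℝ) * B j := by
  rw [← sum_fiberwise_of_maps_to hφ]
  refine sum_le_sum fun j hj => ?_
  rw [sum_congr rfl fun i hi => by rw [(mem_filter.1 hi).2], sum_const, nsmul_eq_mul]
  exact mul_le_mul_of_nonneg_right (by exact_mod_cast hc j hj) (hB j hj)

lemma eq_of_firstDiff_eq {x y z : ℕ → Bool} (hx : x ≠ z) (hy : y ≠ z)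
    (h : firstDiff x z = firstDiff y z) (habove : ∀ i, firstDiff x z < i → x i = y i) :
    x = y := by
  funext i
  rcases lt_trichotomy i (firstDiff x z) with hi | rfl | hi
  · exact (apply_eq_of_lt_firstDiff hi).trans (apply_eq_of_lt_firstDiff (h ▸ hi)).symm
  · rw [Bool.eq_not_iff.2 (apply_firstDiff_ne hx), h, Bool.eq_not_iff.2 (apply_firstDiff_ne hy)]
  · exact habove i hi

section Words

variable {m : ℕ}

lemma extWord_of_lt (σ : Fin m → Bool) {i : ℕ} (hi : i < m) : extWord m σ i = σ ⟨i, hi⟩ :=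
  dif_pos hi

lemma extWord_of_le (σ : Fin m → Bool) {i : ℕ} (hi : m ≤ i) : extWord m σ i = false :=
  dif_neg (not_lt.2 hi)

lemma extWord_injective : Function.Injective (extWord m) := by
  intro σ τ h
  funext i
  simpa only [extWord_of_lt _ i.isLt] using congrFun h i

lemma extWord_parentWord (σ : Fin (m + 1) → Bool) {i : ℕ} (hi : i < m) :
    extWord m (parentWord (m + 1) σ) i = extWord (m + 1) σ i := by
  rw [extWord_of_lt _ hi, extWord_of_lt _ (hi.trans m.lt_succ_self)]
  rfl

lemma firstDiff_extWord_lt {σ τ : Fin m → Bool} (h : σ ≠ τ) :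
    firstDiff (extWord m σ) (extWord m τ) < m := by
  by_contra! hm
  have hne := extWord_injective.ne h
  exact apply_firstDiff_ne hne (by rw [extWord_of_le _ hm, extWord_of_le _ hm])

/-- A word that first leaves `τ` at index `m - ℓ` is determined by its last `ℓ - 1` letters. -/
lemma card_filter_sub_firstDiff_eq_le (τ : Fin m → Bool) {ℓ : ℕ} (hℓ : ℓ ≤ m) :
    #{σ ∈ univ.erase τ | m - firstDiff (extWord m σ) (extWord m τ) = ℓ} ≤ 2 ^ (ℓ - 1) := by
  let tail (σ : Fin m → Bool) (j : Fin (ℓ - 1)) : Bool := σ ⟨m - ℓ + 1 + j, by omega⟩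
  refine (card_le_card_of_injOn tail (fun _ _ => mem_coe.2 (mem_univ _)) ?_).trans
    (by simp)
  intro σ₁ h₁ σ₂ h₂ heq
  simp only [mem_coe, mem_filter, mem_erase, mem_univ, and_true] at h₁ h₂
  have hlt₁ := firstDiff_extWord_lt h₁.1
  have hlt₂ := firstDiff_extWord_lt h₂.1
  refine extWord_injective (eq_of_firstDiff_eq (extWord_injective.ne h₁.1)
    (extWord_injective.ne h₂.1) (by omega) fun i hi => ?_)
  rcases lt_or_ge i m with him | him
  · have := congrFun heq ⟨i - (m - ℓ + 1), by omega⟩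
    simp only [tail, show m - ℓ + 1 + (i - (m - ℓ + 1)) = i by omega] at this
    rw [extWord_of_lt _ him, extWord_of_lt _ him, this]
  · rw [extWord_of_le _ him, extWord_of_le _ him]

end Words

def PrefixDependent (A : ℕ → (ℕ → Bool) → ℝ) (m : ℕ) : Prop :=
  ∀ j < m, ∀ ε ε' : ℕ → Bool, (∀ i < j, ε i = ε' i) → A j ε = A j ε'

lemma PrefixDependent.mono {A : ℕ → (ℕ → Bool) → ℝ} {m m' : ℕ} (h : PrefixDependent A m)
    (hle : m' ≤ m) : PrefixDependent A m' :=
  fun j hj => h j (hj.trans_le hle)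

def fTerm (r : ℝ) (A : ℕ → (ℕ → Bool) → ℝ) (ε : ℕ → Bool) (k : ℕ) : ℝ :=
  A k ε / 2 * r ^ k * sgn (ε k)

section

variable {r a : ℝ} {A : ℕ → (ℕ → Bool) → ℝ} {m k : ℕ} {ε ε' : ℕ → Bool}

lemma fN_eq_sum_fTerm : fN r A m ε = ∑ j ∈ range m, fTerm r A ε j := rfl

lemma fN_succ : fN r A (m + 1) ε = fN r A m ε + fTerm r A ε m :=
  sum_range_succ _ _

lemma fTerm_congr (hA : PrefixDependent A m) (hk : k < m) (h : ∀ i ≤ k, ε i = ε' i) :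
    fTerm r A ε k = fTerm r A ε' k := by
  rw [fTerm, fTerm, hA k hk ε ε' fun i hi => h i hi.le, h k le_rfl]

lemma fN_congr (hA : PrefixDependent A m) (h : ∀ i < m, ε i = ε' i) :
    fN r A m ε = fN r A m ε' :=
  sum_congr rfl fun _ hj =>
    fTerm_congr hA (mem_range.1 hj) fun i hi => h i (hi.trans_lt (mem_range.1 hj))

lemma abs_fTerm_le (hr : 0 ≤ r) (h0 : 0 ≤ A k ε) (ha : A k ε ≤ a) :
    |fTerm r A ε k| ≤ a / 2 * r ^ k := by
  rw [fTerm, abs_mul, abs_sgn, mul_one, abs_of_nonneg (by positivity)]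
  gcongr

lemma abs_fTerm_sub_fTerm (hr : 0 ≤ r) (h0 : 0 ≤ A k ε) (hA : A k ε = A k ε')
    (hne : ε k ≠ ε' k) : |fTerm r A ε k - fTerm r A ε' k| = A k ε * r ^ k := by
  rw [fTerm, fTerm, ← hA, ← mul_sub, abs_mul, abs_sgn_sub_sgn hne,
    abs_of_nonneg (by positivity)]
  ring

lemma abs_sum_Ico_fTerm_sub_le (ha : 0 ≤ a) (hr0 : 0 ≤ r) (hr1 : r < 1)
    (hA : ∀ j < m, ∀ ε, 0 ≤ A j ε ∧ A j ε ≤ a) (p : ℕ) :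
    |∑ j ∈ Ico p m, (fTerm r A ε j - fTerm r A ε' j)| ≤ a * r ^ p / (1 - r) := by
  calc _ ≤ ∑ j ∈ Ico p m, |fTerm r A ε j - fTerm r A ε' j| := abs_sum_le_sum_abs _ _
    _ ≤ ∑ j ∈ Ico p m, a * r ^ j := by
        refine sum_le_sum fun j hj => ?_
        have hjm := (mem_Ico.1 hj).2
        calc _ ≤ |fTerm r A ε j| + |fTerm r A ε' j| := abs_sub _ _
          _ ≤ a / 2 * r ^ j + a / 2 * r ^ j :=
              add_le_add (abs_fTerm_le hr0 (hA j hjm ε).1 (hA j hjm ε).2)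
                (abs_fTerm_le hr0 (hA j hjm ε').1 (hA j hjm ε').2)
          _ = a * r ^ j := by ring
    _ = a * ∑ j ∈ Ico p m, r ^ j := (mul_sum _ _ _).symm
    _ ≤ a * (r ^ p / (1 - r)) := by gcongr; exact geom_sum_Ico_le_of_lt_one hr0 hr1
    _ = a * r ^ p / (1 - r) := mul_div_assoc _ _ _ |>.symm

theorem pow_mul_le_abs_fN_sub_fN (hr0 : 0 < r) (hr1 : r < 1)
    (hA : ∀ j < m, ∀ ε, 1 ≤ A j ε ∧ A j ε ≤ a) (hdep : PrefixDependent A m) (hk : k < m)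
    (hagree : ∀ i < k, ε i = ε' i) (hne : ε k ≠ ε' k) :
    r ^ k * (1 - a * r / (1 - r)) ≤ |fN r A m ε - fN r A m ε'| := by
  have hA0 : ∀ j < m, ∀ ε, 0 ≤ A j ε ∧ A j ε ≤ a :=
    fun j hj ε => ⟨zero_le_one.trans (hA j hj ε).1, (hA j hj ε).2⟩
  have hsplit : fN r A m ε - fN r A m ε' = (fTerm r A ε k - fTerm r A ε' k) +
      ∑ j ∈ Ico (k + 1) m, (fTerm r A ε j - fTerm r A ε' j) := by
    rw [fN_eq_sum_fTerm, fN_eq_sum_fTerm, ← sum_sub_distrib, ← sum_range_add_sum_Ico _ hk,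
      sum_range_succ, sum_eq_zero, zero_add]
    intro j hj
    rw [fTerm_congr hdep ((mem_range.1 hj).trans hk)
      fun i hi => hagree i (hi.trans_lt (mem_range.1 hj)), sub_self]
  have hlead : r ^ k ≤ |fTerm r A ε k - fTerm r A ε' k| := by
    rw [abs_fTerm_sub_fTerm hr0.le (hA0 k hk ε).1 (hdep k hk ε ε' hagree) hne]
    exact le_mul_of_one_le_left (by positivity) (hA k hk ε).1
  have htail := abs_sum_Ico_fTerm_sub_le (ε := ε) (ε' := ε')
    ((hA0 k hk ε).1.trans (hA0 k hk ε).2) hr0.le hr1 hA0 (k + 1)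
  have h1r : 0 < 1 - r := by linarith
  calc r ^ k * (1 - a * r / (1 - r)) = r ^ k - a * r ^ (k + 1) / (1 - r) := by
        field_simp
        ring
    _ ≤ |fTerm r A ε k - fTerm r A ε' k| -
        |∑ j ∈ Ico (k + 1) m, (fTerm r A ε j - fTerm r A ε' j)| := by linarith
    _ ≤ |fN r A m ε - fN r A m ε'| := hsplit ▸ abs_sub_abs_le_abs_add _ _

lemma abs_log_abs_fN_sub_sub_le (hr0 : 0 < r) (hr1 : r < 1)
    (hA : ∀ j < m, ∀ ε, 1 ≤ A j ε ∧ A j ε ≤ a) (hdep : PrefixDependent A m) (hk : k < m)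
    (hagree : ∀ i < k, ε i = ε' i) (hne : ε k ≠ ε' k) {x : ℝ}
    (hx : |x - fN r A m ε'| ≤ a / 2 * r ^ m)
    (hpos : a * r ^ (m - k) < 2 * (1 - a * r / (1 - r))) :
    |(Real.log |fN r A m ε - x| - Real.log |fN r A m ε - fN r A m ε'|)| ≤
      a * r ^ (m - k) / (2 * (1 - a * r / (1 - r)) - a * r ^ (m - k)) := by
  have hsep := pow_mul_le_abs_fN_sub_fN hr0 hr1 hA hdep hk hagree hne
  have hrm : r ^ m = r ^ k * r ^ (m - k) := by rw [← pow_add, Nat.add_sub_cancel' hk.le]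
  have hrk : 0 < r ^ k := pow_pos hr0 k
  have key := abs_log_abs_sub_sub_log_abs_sub_le hsep hx (by rw [hrm]; nlinarith)
  convert key using 1
  rw [hrm]
  field_simp

lemma abs_fN_extWord_sub_fN_parentWord_le (hr : 0 ≤ r) (hA : ∀ ε, 0 ≤ A m ε ∧ A m ε ≤ a)
    (hdep : PrefixDependent A m) (σ : Fin (m + 1) → Bool) :
    |fN r A (m + 1) (extWord (m + 1) σ) - fN r A m (extWord m (parentWord (m + 1) σ))| ≤
      a / 2 * r ^ m := by
  rw [fN_succ, fN_congr hdep fun i hi => (extWord_parentWord σ hi).symm, add_sub_cancel_left]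
  exact abs_fTerm_le hr (hA _).1 (hA _).2

lemma mul_pow_lt_two_mul_one_sub_div (ha1 : 1 ≤ a) (ha3 : a ≤ 3) (hr0 : 0 < r) (hr1 : r ≤ 1 / 16)
    {ℓ : ℕ} (hℓ : 1 ≤ ℓ) : a * r ^ ℓ < 2 * (1 - a * r / (1 - r)) := by
  have hr1' : r < 1 := by linarith
  have hgap : a * r / (1 - r) ≤ 1 / 5 := by
    rw [div_le_iff₀ (by linarith)]
    nlinarith
  have hpow : r ^ ℓ ≤ r := pow_le_of_le_one hr0.le hr1'.le (by omega)
  nlinarith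

theorem abs_sum_log_sub_log_le (ha1 : 1 ≤ a) (ha3 : a ≤ 3) (hr0 : 0 < r) (hr1 : r ≤ 1 / 16)
    (hA : ∀ j < m + 1, ∀ ε, 1 ≤ A j ε ∧ A j ε ≤ a) (hdep : PrefixDependent A (m + 1))
    (σ : Fin (m + 1) → Bool) :
    |∑ σ' ∈ univ.erase (parentWord (m + 1) σ),
        (Real.log |fN r A m (extWord m σ') - fN r A (m + 1) (extWord (m + 1) σ)| -
          Real.log |fN r A m (extWord m σ') - fN r A m (extWord m (parentWord (m + 1) σ))|)| ≤
      ∑ ℓ ∈ Icc 1 m, (2 : ℝ) ^ (ℓ - 1) * a * r ^ ℓ / (2 * (1 - a * r / (1 - r)) - a * r ^ ℓ) := by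
  set τ : Fin m → Bool := parentWord (m + 1) σ
  have hr1' : r < 1 := by linarith
  have hpos {ℓ : ℕ} (hℓ : 1 ≤ ℓ) := mul_pow_lt_two_mul_one_sub_div ha1 ha3 hr0 hr1 hℓ
  have hparent := abs_fN_extWord_sub_fN_parentWord_le (r := r) hr0.le
    (fun ε => ⟨zero_le_one.trans (hA m m.lt_succ_self ε).1, (hA m m.lt_succ_self ε).2⟩)
    (hdep.mono m.le_succ) σ
  set B : ℕ → ℝ := fun ℓ => a * r ^ ℓ / (2 * (1 - a * r / (1 - r)) - a * r ^ ℓ)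
  have hword : ∀ σ' ∈ univ.erase τ,
      |(Real.log |fN r A m (extWord m σ') - fN r A (m + 1) (extWord (m + 1) σ)| -
          Real.log |fN r A m (extWord m σ') - fN r A m (extWord m τ)|)| ≤
        B (m - firstDiff (extWord m σ') (extWord m τ)) := by
    intro σ' hσ'
    have hlt := firstDiff_extWord_lt (ne_of_mem_erase hσ')
    exact abs_log_abs_fN_sub_sub_le hr0 hr1' (fun j hj => hA j (hj.trans m.lt_succ_self))
      (hdep.mono m.le_succ) hlt (fun i hi => apply_eq_of_lt_firstDiff hi)
      (apply_firstDiff_ne (extWord_injective.ne (ne_of_mem_erase hσ'))) hparent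
      (hpos (by omega))
  calc _ ≤ ∑ σ' ∈ univ.erase τ,
        |(Real.log |fN r A m (extWord m σ') - fN r A (m + 1) (extWord (m + 1) σ)| -
          Real.log |fN r A m (extWord m σ') - fN r A m (extWord m τ)|)| := abs_sum_le_sum_abs _ _
    _ ≤ ∑ σ' ∈ univ.erase τ, B (m - firstDiff (extWord m σ') (extWord m τ)) := sum_le_sum hword
    _ ≤ ∑ ℓ ∈ Icc 1 m, ((2 ^ (ℓ - 1) : ℕ) : ℝ) * B ℓ := by
        refine sum_comp_le_sum_mul_of_card_fiber_le (fun σ' hσ' => ?_) (fun ℓ hℓ => ?_)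
          fun ℓ hℓ => card_filter_sub_firstDiff_eq_le τ (mem_Icc.1 hℓ).2
        · have := firstDiff_extWord_lt (ne_of_mem_erase hσ')
          exact mem_Icc.2 ⟨by omega, by omega⟩
        · have := hpos (mem_Icc.1 hℓ).1
          exact div_nonneg (by positivity) (by linarith)
    _ = _ := sum_congr rfl fun ℓ _ => by push_cast; ring

end

theorem stmt4_general (a r : ℝ) (ha1 : 1 ≤ a) (ha3 : a ≤ 3) (hr0 : 0 < r) (hr1 : r ≤ 1 / 16)
    (n : ℕ)
    (A : ℕ → (ℕ → Bool) → ℝ)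
    (hAbd : ∀ k, k ≤ n - 1 → ∀ ε, 1 ≤ A k ε ∧ A k ε ≤ a)
    (hAdep : ∀ k, k ≤ n - 1 → ∀ ε ε', (∀ j < k, ε j = ε' j) → A k ε = A k ε')
    (σ : Fin n → Bool) (x xh Δ₂ : ℝ)
    (hx : x = fN r A n (extWord n σ))
    (hxh : xh = fN r A (n - 1) (extWord (n - 1) (parentWord n σ)))
    (hΔ₂ : Δ₂ = 2 * ∑ σ' ∈ Finset.univ.erase (parentWord n σ),
        (Real.log |fN r A (n - 1) (extWord (n - 1) σ') - x| -
          Real.log |fN r A (n - 1) (extWord (n - 1) σ') - xh|)) :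
    |Δ₂| ≤ 2 * ∑ ℓ ∈ Finset.Icc 1 (n - 1),
        (2 : ℝ) ^ (ℓ - 1) * a * r ^ ℓ / (2 * (1 - a * r / (1 - r)) - a * r ^ ℓ) := by
  rcases n with _ | m
  · have hempty : univ.erase (parentWord 0 σ) = ∅ := eq_empty_of_forall_notMem
      fun σ' h => (mem_erase.1 h).1 (funext fun i => absurd i.isLt (by omega))
    rw [hΔ₂, hempty]
    simp
  subst hx hxh hΔ₂
  rw [abs_mul, abs_two]
  gcongr
  exact abs_sum_log_sub_log_le ha1 ha3 hr0 hr1 (fun j hj => hAbd j (by omega))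
    (fun j hj => hAdep j (by omega)) σ

/-- With `a ∈ [1,3]`, `r ∈ (0,1/16]`, coefficients `a_k(ε) ∈ [1,a]` (depending
only on the first `k` letters, `a_0 ≡ 1`) for `k ≤ n−1`, `x = f_n(ε) ∈ K_n` and
`x̂ = f_{n−1}(ε̂) ∈ K_{n−1}` its parent, the quantity
`Δ₂ = 2 Σ_{ε′ ∈ 𝓔_{n−1}, ε′ ≠ ε̂} ( ln|f_{n−1}(ε′) − x| − ln|f_{n−1}(ε′) − x̂| )`
satisfies `|Δ₂| ≤ 2 Σ_{ℓ=1}^{n−1} 2^{ℓ−1} a r^ℓ / ( 2(1 − ar/(1−r)) − a r^ℓ )`. -/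
theorem stmt4 (a r : ℝ) (ha1 : 1 ≤ a) (ha3 : a ≤ 3) (hr0 : 0 < r) (hr1 : r ≤ 1 / 16)
    (n : ℕ) (hn : 1 ≤ n)
    (A : ℕ → (ℕ → Bool) → ℝ)
    (hA0 : ∀ ε, A 0 ε = 1)
    (hAbd : ∀ k, k ≤ n - 1 → ∀ ε, 1 ≤ A k ε ∧ A k ε ≤ a)
    (hAdep : ∀ k, k ≤ n - 1 → ∀ ε ε', (∀ j < k, ε j = ε' j) → A k ε = A k ε')
    (σ : Fin n → Bool) (x xh Δ₂ : ℝ)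
    (hx : x = fN r A n (extWord n σ))
    (hxh : xh = fN r A (n - 1) (extWord (n - 1) (parentWord n σ)))
    (hΔ₂ : Δ₂ = 2 * ∑ σ' ∈ Finset.univ.erase (parentWord n σ),
        (Real.log |fN r A (n - 1) (extWord (n - 1) σ') - x| -
          Real.log |fN r A (n - 1) (extWord (n - 1) σ') - xh|)) :
    |Δ₂| ≤ 2 * ∑ ℓ ∈ Finset.Icc 1 (n - 1),
        (2 : ℝ) ^ (ℓ - 1) * a * r ^ ℓ / (2 * (1 - a * r / (1 - r)) - a * r ^ ℓ) :=
  stmt4_general a r ha1 ha3 hr0 hr1 n A hAbd hAdep σ x xh Δ₂ hx hxh hΔ₂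

end
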